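/- Let p and q̂ be probability mass functions on finite V. Define the distribution μ of the speculative-decoding output: μ(x) = min(p(x), q̂(x)) + β·r(x), where β = 1 - Σ_y min(p(y), q̂(y)) and r is the normalized residual max(0, p - q̂)/β when β > 0, and μ(x) = min(p(x), q̂(x)) when β = 0. Then μ = p in all cases (including the degenerate case q̂ = p where β = 0). -/

import Mathlib

/-!
Pointwise, `min (p x) (q̂ x) + max 0 (p x - q̂ x) = p x`. Summing and using `∑ p = 1` identifies
`β = 1 - ∑ min p q̂` with the total residual mass `∑ max 0 (p - q̂)`. If `β ≠ 0` the factor `β`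
cancels against the normalisation of the residual; if `β = 0` the residual, a sum of nonnegative
terms, vanishes pointwise, so `min (p x) (q̂ x)` is already `p x`.
-/

open Finset

section

variable {α : Type*} [AddCommGroup α] [LinearOrder α] [IsOrderedAddMonoid α]

theorem min_add_max_zero_sub (a b : α) : min a b + max 0 (a - b) = a := by
  rcases le_total a b with h | h
  · rw [min_eq_left h, max_eq_left (sub_nonpos.2 h), add_zero]
  · rw [min_eq_right h, max_eq_right (sub_nonneg.2 h), add_sub_cancel]

theorem Finset.sum_sub_sum_min_eq_sum_max_zero_sub {ι : Type*} (s : Finset ι) (p q : ι → α) :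
    ∑ i ∈ s, p i - ∑ i ∈ s, min (p i) (q i) = ∑ i ∈ s, max 0 (p i - q i) := by
  rw [sub_eq_iff_eq_add', ← sum_add_distrib]
  exact sum_congr rfl fun i _ => (min_add_max_zero_sub (p i) (q i)).symm

end

theorem speculative_output_eq_target_general {V : Type*} [Fintype V]
    (p qh : V → ℝ)
    (hp1 : ∑ x, p x = 1) :
    ∀ x : V,
      (if (1 - ∑ y, min (p y) (qh y)) = 0 then
          min (p x) (qh x)
        else
          min (p x) (qh x)
            + (1 - ∑ y, min (p y) (qh y))
              * (max 0 (p x - qh x) / (1 - ∑ y, min (p y) (qh y))))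
      = p x := by
  intro x
  have hβ : 1 - ∑ y, min (p y) (qh y) = ∑ y, max 0 (p y - qh y) := by
    rw [← hp1]
    exact sum_sub_sum_min_eq_sum_max_zero_sub univ p qh
  split_ifs with h
  · have hx : max 0 (p x - qh x) = 0 :=
      (sum_eq_zero_iff_of_nonneg fun y _ => le_max_left 0 (p y - qh y)).1 (hβ ▸ h) x
        (mem_univ x)
    simpa only [hx, add_zero] using min_add_max_zero_sub (p x) (qh x)
  · rw [mul_div_cancel₀ _ h, min_add_max_zero_sub]

/-- The output distribution of the accept/resample mechanism equals `p` in all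
cases, including the degenerate case `β = 0` (i.e. `q̂ = p`). -/
theorem speculative_output_eq_target {V : Type*} [Fintype V]
    (p qh : V → ℝ)
    (hp0 : ∀ x, 0 ≤ p x) (hq0 : ∀ x, 0 ≤ qh x)
    (hp1 : ∑ x, p x = 1) (hq1 : ∑ x, qh x = 1) :
    ∀ x : V,
      (if (1 - ∑ y, min (p y) (qh y)) = 0 then
          min (p x) (qh x)
        else
          min (p x) (qh x)
            + (1 - ∑ y, min (p y) (qh y))
              * (max 0 (p x - qh x) / (1 - ∑ y, min (p y) (qh y))))
      = p x :=
  speculative_output_eq_target_general p qh hp1
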